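/- arXiv:2210.01262 — 2 statements merged into one kernel-verified Lean document; each statement's English description precedes it below -/
import Mathlib

section
/- Let f₁ ≠ f₂ ∈ ℂ and r > |f₁ - f₂|, and suppose the ellipse {z : |z - f₁| + |z - f₂| = r} is the zero set of conj(u) z² + p z conj(z) + u conj(z)² + conj(v) z + v conj(z) + q with p, q ∈ ℝ, u ≠ 0, p² - 4|u|² > 0. Then r = (1/2)|f₁ - f₂| √(2 + |p/u|). -/
/-!
Translate the centre `(f₁ + f₂) / 2` to `0` and rotate the focal axis onto the real line by a
unimodular `d`: the general form keeps its shape, with the same `p` and `u` replaced by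
`u * conj d ^ 2`. In standard position, with `a = r / 2`, `c = |f₁ - f₂| / 2` and
`b² = a² - c²`, the ellipse passes through `±a`, `±i b` and `(a + i b) / √2`. Vanishing at these
five points forces `v = 0`, `u` real and `2 u (a² + b²) = -p c²`, so
`2 + |p / u| = 2 + 2 (a² + b²) / c² = (2 a / c)²`, i.e. `r = 2 a = c √(2 + |p / u|)`.
-/

open Complex ComplexConjugate

def conicForm (p : ℝ) (u v q z : ℂ) : ℂ :=
  conj u * z ^ 2 + (p : ℂ) * z * conj z + u * conj z ^ 2 + conj v * z + v * conj z + q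

theorem conicForm_affine (p : ℝ) (u v q c₀ d w : ℂ) (hd : d * conj d = 1) :
    conicForm p u v q (c₀ + d * w) =
      conicForm p (u * conj d ^ 2) (conj d * (2 * u * conj c₀ + p * c₀ + v))
        (conicForm p u v q c₀) w := by
  simp only [conicForm, map_add, map_mul, map_pow, map_ofNat, conj_conj, conj_ofReal]
  linear_combination (p * w * conj w) * hd

theorem norm_ellipse_point_add {a b c t s : ℝ} (hc : |c| ≤ a) (habc : b ^ 2 + c ^ 2 = a ^ 2)
    (hts : t ^ 2 + s ^ 2 = 1) :
    ‖((a * t + c : ℝ) : ℂ) + (b * s : ℝ) * I‖ = a + c * t := by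
  have hca : c ^ 2 ≤ a ^ 2 := by nlinarith
  have hct : -a ≤ c * t := (abs_le_of_sq_le_sq' (by nlinarith) ((abs_nonneg c).trans hc)).1
  rw [norm_add_mul_I, show (a * t + c) ^ 2 + (b * s) ^ 2 = (a + c * t) ^ 2 by
    linear_combination s ^ 2 * habc + (a ^ 2 - c ^ 2) * hts, Real.sqrt_sq (by linarith)]

theorem norm_add_norm_sub_ellipse_point {a b c t s : ℝ} (hc : |c| ≤ a)
    (habc : b ^ 2 + c ^ 2 = a ^ 2) (hts : t ^ 2 + s ^ 2 = 1) :
    ‖(a * t + b * s * I : ℂ) + c‖ + ‖(a * t + b * s * I : ℂ) - c‖ = 2 * a := by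
  have hplus := norm_ellipse_point_add hc habc hts
  have hminus := norm_ellipse_point_add (a := a) (b := b) (c := -c) (by rwa [abs_neg])
    (by rwa [neg_sq]) hts
  push_cast at hplus hminus
  rw [show (a * t + b * s * I : ℂ) + c = a * t + c + b * s * I by ring,
    show (a * t + b * s * I : ℂ) - c = a * t + -c + b * s * I by ring, hplus, hminus]
  ring

theorem exists_norm_eq_one_and_eq_norm_mul (z : ℂ) : ∃ d : ℂ, ‖d‖ = 1 ∧ z = ‖z‖ * d :=
  ⟨_, norm_exp_ofReal_mul_I z.arg, (norm_mul_exp_arg_mul_I z).symm⟩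

theorem norm_sub_add_norm_sub_midpoint_add {f₁ f₂ d : ℂ} {c : ℝ} (hd : ‖d‖ = 1)
    (hf : f₂ - f₁ = 2 * c * d) (w : ℂ) :
    ‖(f₁ + f₂) / 2 + d * w - f₁‖ + ‖(f₁ + f₂) / 2 + d * w - f₂‖ = ‖w + c‖ + ‖w - c‖ := by
  rw [show (f₁ + f₂) / 2 + d * w - f₁ = d * (w + c) by linear_combination hf / 2,
    show (f₁ + f₂) / 2 + d * w - f₂ = d * (w - c) by linear_combination -hf / 2,
    norm_mul, norm_mul, hd, one_mul, one_mul]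

theorem conicForm_coeff_relation_of_vanishing_on_ellipse {p : ℝ} {U V Q : ℂ} {a b : ℝ}
    (ha : a ≠ 0) (hb : b ≠ 0)
    (hG : ∀ t s : ℝ, t ^ 2 + s ^ 2 = 1 → conicForm p U V Q (a * t + b * s * I) = 0) :
    2 * U * (a ^ 2 + b ^ 2) + p * (a ^ 2 - b ^ 2) = 0 := by
  have hG' (t s : ℝ) (hts : t ^ 2 + s ^ 2 = 1) :
      conj U * (a * t + b * s * I) ^ 2 + p * (a * t + b * s * I) * (a * t - b * s * I)
        + U * (a * t - b * s * I) ^ 2 + conj V * (a * t + b * s * I)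
        + V * (a * t - b * s * I) + Q = 0 := by
    have h := hG t s hts
    simp only [conicForm, map_add, map_mul, conj_ofReal, conj_I] at h
    linear_combination h
  obtain ⟨s, hs⟩ : ∃ s : ℝ, s ^ 2 = 1 / 2 := ⟨√(1 / 2), Real.sq_sqrt (by norm_num)⟩
  have h₁ := hG' 1 0 (by norm_num)
  have h₂ := hG' (-1) 0 (by norm_num)
  have h₃ := hG' 0 1 (by norm_num)
  have h₄ := hG' 0 (-1) (by norm_num)
  have h₅ := hG' s s (by linarith)
  push_cast at h₁ h₂ h₃ h₄
  have hsC : (s : ℂ) ^ 2 = 1 / 2 := by rw [← ofReal_pow, hs]; norm_num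
  have haC : (a : ℂ) ≠ 0 := ofReal_ne_zero.mpr ha
  have hbC : (b : ℂ) ≠ 0 := ofReal_ne_zero.mpr hb
  have hV : V = 0 := by
    have hre : (conj V + V) * (2 * a) = 0 := by linear_combination h₁ - h₂
    have him : (conj V - V) * (2 * b * I) = 0 := by linear_combination h₃ - h₄
    have hsum := (mul_eq_zero.mp hre).resolve_right (by simpa using haC)
    have hdiff := (mul_eq_zero.mp him).resolve_right (by simpa [I_ne_zero] using hbC)
    linear_combination (hsum - hdiff) / 2
  simp only [hV, map_zero, zero_mul, add_zero] at h₁ h₃ h₅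
  have hU : conj U = U := by
    have him : (conj U - U) * (2 * a * b * I) = 0 := by
      linear_combination 2 * h₅ - h₁ - h₃ - 2 * (conj U * (a + b * I) ^ 2
        + p * (a + b * I) * (a - b * I) + U * (a - b * I) ^ 2) * hsC
    exact sub_eq_zero.mp ((mul_eq_zero.mp him).resolve_right (by simp [haC, hbC, I_ne_zero]))
  linear_combination h₁ - h₃ + (conj U + U - p) * b ^ 2 * I_sq - (a ^ 2 + b ^ 2) * hU

theorem two_mul_eq_of_conicForm_vanishing_on_ellipse {p : ℝ} {U V Q : ℂ} {a c : ℝ}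
    (hc : 0 ≤ c) (hca : c < a) (hU : U ≠ 0)
    (hG : ∀ w : ℂ, ‖w + c‖ + ‖w - c‖ = 2 * a → conicForm p U V Q w = 0) :
    2 * a = c * √(2 + ‖(p : ℂ) / U‖) := by
  set b := √(a ^ 2 - c ^ 2)
  have hbc : b ^ 2 + c ^ 2 = a ^ 2 := by rw [Real.sq_sqrt (by nlinarith)]; ring
  have hb : b ≠ 0 := (Real.sqrt_pos.mpr (by nlinarith)).ne'
  have hrel := conicForm_coeff_relation_of_vanishing_on_ellipse (by linarith : a ≠ 0) hb
    fun t s hts ↦ hG _ <| norm_add_norm_sub_ellipse_point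
      (by rw [abs_of_nonneg hc]; exact hca.le) hbc hts
  have hrel' : 2 * U * ((a ^ 2 + b ^ 2 : ℝ) : ℂ) = -(p * c ^ 2 : ℝ) := by
    have hbcC : (b : ℂ) ^ 2 + c ^ 2 = a ^ 2 := by exact_mod_cast hbc
    push_cast
    linear_combination hrel + p * hbcC
  have hab : 0 < a ^ 2 + b ^ 2 := by positivity
  have hc0 : c ≠ 0 := by
    rintro rfl
    rw [zero_pow two_ne_zero, mul_zero, ofReal_zero, neg_zero, mul_eq_zero, ofReal_eq_zero]
      at hrel'
    exact hrel'.elim (mul_ne_zero two_ne_zero hU) hab.ne'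
  have hnorm : 2 * ‖U‖ * (a ^ 2 + b ^ 2) = |p| * c ^ 2 := by
    have h := congrArg norm hrel'
    rwa [norm_mul, norm_mul, norm_neg, norm_real, norm_real, Real.norm_of_nonneg hab.le,
      Real.norm_eq_abs, abs_mul, abs_of_nonneg (sq_nonneg c), Complex.norm_two] at h
  have hsq : 2 + ‖(p : ℂ) / U‖ = (2 * a / c) ^ 2 := by
    rw [norm_div, norm_real, Real.norm_eq_abs]
    field_simp
    linear_combination 2 * ‖U‖ * hbc - hnorm
  rw [hsq, Real.sqrt_sq (div_nonneg (by linarith) hc)]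
  field_simp

theorem sum_of_general_form_general (f₁ f₂ : ℂ) (r : ℝ)
    (hr : ‖f₁ - f₂‖ < r) (p q : ℝ) (u v : ℂ) (hu : u ≠ 0)
    (hset : {z : ℂ | ‖z - f₁‖ + ‖z - f₂‖ = r} =
      {z : ℂ | conj u * z ^ 2 + (p : ℂ) * z * conj z + u * (conj z) ^ 2 +
        conj v * z + v * conj z + (q : ℂ) = 0}) :
    r = (1 / 2) * ‖f₁ - f₂‖ *
      Real.sqrt (2 + ‖(p : ℂ) / u‖) := by
  set c := ‖f₁ - f₂‖ / 2 with hc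
  obtain ⟨d, hd, hfd⟩ := exists_norm_eq_one_and_eq_norm_mul (f₂ - f₁)
  have hf : f₂ - f₁ = 2 * c * d := by rw [hfd, hc, norm_sub_rev]; push_cast; ring
  have hdd : d * conj d = 1 := by rw [mul_conj, normSq_eq_norm_sq, hd]; norm_num
  set c₀ := (f₁ + f₂) / 2
  have hG (w : ℂ) (hw : ‖w + c‖ + ‖w - c‖ = 2 * (r / 2)) :
      conicForm p (u * conj d ^ 2) (conj d * (2 * u * conj c₀ + p * c₀ + v))
        (conicForm p u v q c₀) w = 0 := by
    have hz : c₀ + d * w ∈ {z : ℂ | ‖z - f₁‖ + ‖z - f₂‖ = r} := by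
      rw [Set.mem_ofPred_eq, norm_sub_add_norm_sub_midpoint_add hd hf]
      linarith
    rw [hset] at hz
    rwa [← conicForm_affine _ _ _ _ _ _ _ hdd]
  have hU : u * conj d ^ 2 ≠ 0 :=
    mul_ne_zero hu (pow_ne_zero _ ((map_ne_zero _).mpr (norm_ne_zero_iff.mp (by simp [hd]))))
  have key := two_mul_eq_of_conicForm_vanishing_on_ellipse (by positivity) (by linarith) hU hG
  rw [norm_div, norm_mul, norm_pow, norm_conj, hd, one_pow, mul_one, ← norm_div, hc] at key
  linarith

/-- If the ellipse `|z - f₁| + |z - f₂| = r` is the zero set of the general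
conic form (with `u ≠ 0`), then `r = (1/2)|f₁ - f₂| √(2 + |p/u|)`. -/
theorem sum_of_general_form (f₁ f₂ : ℂ) (r : ℝ) (hne : f₁ ≠ f₂)
    (hr : ‖f₁ - f₂‖ < r) (p q : ℝ) (u v : ℂ) (hu : u ≠ 0)
    (hell : p ^ 2 - 4 * ‖u‖ ^ 2 > 0)
    (hset : {z : ℂ | ‖z - f₁‖ + ‖z - f₂‖ = r} =
      {z : ℂ | conj u * z ^ 2 + (p : ℂ) * z * conj z + u * (conj z) ^ 2 +
        conj v * z + v * conj z + (q : ℂ) = 0}) :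
    r = (1 / 2) * ‖f₁ - f₂‖ *
      Real.sqrt (2 + ‖(p : ℂ) / u‖) :=
  sum_of_general_form_general f₁ f₂ r hr p q u v hu hset
end

section
/- Let t > 0 and a, b ∈ 𝔻. Define U = (|ab|² - |a+b+1|²)² t² - 4|a+1|²|b+1|² t² + 2(|ab|²(a+b-conj(a)-conj(b)) - (conj(a)+conj(b)+1)(a²+b²+1) + (a+b+1)(conj(a)²+conj(b)²+1) + 2(ab - conj(a)conj(b)))t + (a-b)² + (conj(a)-conj(b))² - 2|a+b|² + 4(|ab|²+1), and P = 2((|ab|² - |a+b+1|²)² - 4|a+1|²|b+1|²)t² - 2(4|ab|² + (a-b)² + (conj(a)-conj(b))² - 2|a+b|² + 4). Then P² - 4U conj(U) = -64(1-|b|²)(1-|a|²)|1-a conj(b)|² t² ((1-|b|²)(1-|a|²) - 4(Re(a)+1)(Re(b)+1)), and this quantity is strictly positive. -/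
open Complex ComplexConjugate

lemma Complex.one_sub_sq_norm_le (z : ℂ) : 1 - ‖z‖ ^ 2 ≤ (1 - z.re) * (1 + z.re) := by
  nlinarith [sq_norm_sub_sq_re z, sq_nonneg z.im]

lemma Complex.re_mem_Ioo_of_norm_lt_one {z : ℂ} (hz : ‖z‖ < 1) : z.re ∈ Set.Ioo (-1) 1 :=
  abs_lt.mp ((abs_re_le_norm z).trans_lt hz)

lemma one_sub_mul_one_sub_lt_four {x y : ℝ} (hx : -1 < x) (hx' : x ≤ 1) (hy : -1 < y)
    (hy' : y ≤ 1) : (1 - x) * (1 - y) < 4 := by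
  calc (1 - x) * (1 - y) < 2 * 2 :=
        mul_lt_mul'' (by linarith) (by linarith) (by linarith) (by linarith)
    _ = 4 := by norm_num

lemma Complex.one_sub_sq_norm_mul_lt_four_mul {a b : ℂ} (ha : ‖a‖ < 1) (hb : ‖b‖ < 1) :
    (1 - ‖b‖ ^ 2) * (1 - ‖a‖ ^ 2) < 4 * (a.re + 1) * (b.re + 1) := by
  obtain ⟨ha₁, ha₂⟩ := re_mem_Ioo_of_norm_lt_one ha
  obtain ⟨hb₁, hb₂⟩ := re_mem_Ioo_of_norm_lt_one hb
  calc (1 - ‖b‖ ^ 2) * (1 - ‖a‖ ^ 2)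
      ≤ ((1 - b.re) * (1 + b.re)) * ((1 - a.re) * (1 + a.re)) :=
        mul_le_mul (one_sub_sq_norm_le b) (one_sub_sq_norm_le a)
          (sub_nonneg.mpr (pow_le_one₀ (norm_nonneg a) ha.le))
          (mul_nonneg (by linarith) (by linarith))
    _ = (1 - a.re) * (1 - b.re) * ((a.re + 1) * (b.re + 1)) := by ring
    _ < 4 * ((a.re + 1) * (b.re + 1)) :=
        mul_lt_mul_of_pos_right (one_sub_mul_one_sub_lt_four ha₁ ha₂.le hb₁ hb₂.le)
          (mul_pos (by linarith) (by linarith))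
    _ = 4 * (a.re + 1) * (b.re + 1) := by ring

lemma Complex.one_sub_mul_conj_ne_zero {a b : ℂ} (ha : ‖a‖ < 1) (hb : ‖b‖ ≤ 1) :
    1 - a * conj b ≠ 0 := by
  have hlt : ‖a * conj b‖ < 1 := by
    rw [norm_mul, norm_conj]
    exact mul_lt_one_of_nonneg_of_lt_one_left (norm_nonneg a) ha hb
  exact sub_ne_zero.mpr (ne_of_apply_ne norm (by rw [norm_one]; exact hlt.ne'))

/-- The ellipse-condition discriminant identity for the interior curve of the
Blaschke-like map `ψ_t ∘ B ∘ ψ_t⁻¹` on the parabolic region, together with its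
strict positivity. -/
theorem ellipse_discriminant_parabola (t : ℝ) (ht : 0 < t)
    (a b : ℂ) (ha : ‖a‖ < 1) (hb : ‖b‖ < 1) (U P : ℂ)
    (hU : U = (((‖a * b‖ ^ 2 - ‖a + b + 1‖ ^ 2) ^ 2 : ℝ) : ℂ) * (t : ℂ) ^ 2 -
      ((4 * ‖a + 1‖ ^ 2 * ‖b + 1‖ ^ 2 : ℝ) : ℂ) * (t : ℂ) ^ 2 +
      2 * (((‖a * b‖ ^ 2 : ℝ) : ℂ) * (a + b - conj a - conj b) -
        (conj a + conj b + 1) * (a ^ 2 + b ^ 2 + 1) +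
        (a + b + 1) * ((conj a) ^ 2 + (conj b) ^ 2 + 1) +
        2 * (a * b - conj a * conj b)) * (t : ℂ) +
      (a - b) ^ 2 + (conj a - conj b) ^ 2 -
      ((2 * ‖a + b‖ ^ 2 : ℝ) : ℂ) +
      ((4 * (‖a * b‖ ^ 2 + 1) : ℝ) : ℂ))
    (hP : P = 2 * (((‖a * b‖ ^ 2 - ‖a + b + 1‖ ^ 2) ^ 2 -
        4 * ‖a + 1‖ ^ 2 * ‖b + 1‖ ^ 2 : ℝ) : ℂ) * (t : ℂ) ^ 2 -
      2 * (((4 * ‖a * b‖ ^ 2 : ℝ) : ℂ) + (a - b) ^ 2 + (conj a - conj b) ^ 2 -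
        ((2 * ‖a + b‖ ^ 2 : ℝ) : ℂ) + 4)) :
    P ^ 2 - 4 * U * conj U =
      ((-64 * (1 - ‖b‖ ^ 2) * (1 - ‖a‖ ^ 2) *
        ‖1 - a * conj b‖ ^ 2 * t ^ 2 *
        ((1 - ‖b‖ ^ 2) * (1 - ‖a‖ ^ 2) -
          4 * (a.re + 1) * (b.re + 1)) : ℝ) : ℂ) ∧
    0 < -64 * (1 - ‖b‖ ^ 2) * (1 - ‖a‖ ^ 2) *
      ‖1 - a * conj b‖ ^ 2 * t ^ 2 *
      ((1 - ‖b‖ ^ 2) * (1 - ‖a‖ ^ 2) -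
        4 * (a.re + 1) * (b.re + 1)) := by
  refine ⟨?_, ?_⟩
  · -- writing `‖z‖ ^ 2 = z * conj z` and `re z = (z + conj z) / 2` makes this a polynomial
    -- identity in `a, b, conj a, conj b, t`
    subst hU hP
    push_cast [← mul_conj', re_eq_add_conj]
    simp only [map_add, map_sub, map_mul, map_pow, map_one, map_ofNat, conj_conj, conj_ofReal]
    ring
  · have hA : 0 < 1 - ‖a‖ ^ 2 := sub_pos.mpr (pow_lt_one₀ (norm_nonneg a) ha two_ne_zero)
    have hB : 0 < 1 - ‖b‖ ^ 2 := sub_pos.mpr (pow_lt_one₀ (norm_nonneg b) hb two_ne_zero)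
    have hC : 0 < ‖1 - a * conj b‖ ^ 2 :=
      pow_pos (norm_pos_iff.mpr (one_sub_mul_conj_ne_zero ha hb.le)) 2
    have hD := one_sub_sq_norm_mul_lt_four_mul ha hb
    calc 0 < 64 * (1 - ‖b‖ ^ 2) * (1 - ‖a‖ ^ 2) * ‖1 - a * conj b‖ ^ 2 * t ^ 2 *
          (4 * (a.re + 1) * (b.re + 1) - (1 - ‖b‖ ^ 2) * (1 - ‖a‖ ^ 2)) :=
          mul_pos (mul_pos (mul_pos (mul_pos (mul_pos (by norm_num) hB) hA) hC) (pow_pos ht 2))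
            (sub_pos.mpr hD)
      _ = _ := by ring
end
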